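/- arXiv:2312.13074 — 2 statements merged into one kernel-verified Lean document; each statement's English description precedes it below -/
import Mathlib

section
/- Bimonad structures on a given monad B on a monoidal category C are in one-to-one correspondence with monoidal structures on the Eilenberg–Moore category C^B such that the forgetful functor U^B : C^B → C is strict monoidal. -/
open CategoryTheory Category MonoidalCategory

universe v₁ u₁

/-- An opmonoidal structure on a functor between monoidal categories. -/
structure OpmonStr {C : Type u₁} [Category.{v₁} C] [MonoidalCategory C]
    {D : Type u₁} [Category.{v₁} D] [MonoidalCategory D] (F : C ⥤ D) where
  d : ∀ x y : C, F.obj (x ⊗ y) ⟶ F.obj x ⊗ F.obj y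
  e : F.obj (𝟙_ C) ⟶ 𝟙_ D
  d_natural : ∀ {x x' y y' : C} (f : x ⟶ x') (g : y ⟶ y'),
    F.map (f ⊗ₘ g) ≫ d x' y' = d x y ≫ (F.map f ⊗ₘ F.map g)
  coassoc : ∀ x y z : C,
    d (x ⊗ y) z ≫ (d x y ⊗ₘ 𝟙 (F.obj z)) ≫ (α_ (F.obj x) (F.obj y) (F.obj z)).hom =
      F.map (α_ x y z).hom ≫ d x (y ⊗ z) ≫ (𝟙 (F.obj x) ⊗ₘ d y z)
  counit_left : ∀ x : C,
    d (𝟙_ C) x ≫ (e ⊗ₘ 𝟙 (F.obj x)) ≫ (λ_ (F.obj x)).hom = F.map (λ_ x).hom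
  counit_right : ∀ x : C,
    d x (𝟙_ C) ≫ (𝟙 (F.obj x) ⊗ₘ e) ≫ (ρ_ (F.obj x)).hom = F.map (ρ_ x).hom

/-- A bimonad structure on a given monad `t` on a monoidal category. -/
structure BimonadStr {C : Type u₁} [Category.{v₁} C] [MonoidalCategory C]
    (t : Monad C) where
  op : OpmonStr t.toFunctor
  mul_opmon : ∀ x y : C,
    t.μ.app (x ⊗ y) ≫ op.d x y =
      t.map (op.d x y) ≫ op.d (t.obj x) (t.obj y) ≫ (t.μ.app x ⊗ₘ t.μ.app y)
  mul_counit : t.μ.app (𝟙_ C) ≫ op.e = t.map op.e ≫ op.e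
  unit_opmon : ∀ x y : C, t.η.app (x ⊗ y) ≫ op.d x y = t.η.app x ⊗ₘ t.η.app y
  unit_counit : t.η.app (𝟙_ C) ≫ op.e = 𝟙 (𝟙_ C)

/-- A monoidal structure on the Eilenberg–Moore category of a monad `t` for which the
forgetful functor `U^t` is strict monoidal. -/
structure StrictMonoidalAlg {C : Type u₁} [Category.{v₁} C] [MonoidalCategory C]
    (t : Monad C) where
  inst : MonoidalCategory t.Algebra
  tensor_A : ∀ X Y : t.Algebra,
    (@MonoidalCategoryStruct.tensorObj _ _ inst.toMonoidalCategoryStruct X Y).A = X.A ⊗ Y.A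
  unit_A : (@MonoidalCategoryStruct.tensorUnit _ _ inst.toMonoidalCategoryStruct).A = 𝟙_ C
  tensorHom_f : ∀ {X X' Y Y' : t.Algebra} (f : X ⟶ X') (g : Y ⟶ Y'),
    HEq (@MonoidalCategoryStruct.tensorHom _ _ inst.toMonoidalCategoryStruct _ _ _ _ f g).f
      (f.f ⊗ₘ g.f)
  associator_f : ∀ X Y Z : t.Algebra,
    HEq (@MonoidalCategoryStruct.associator _ _ inst.toMonoidalCategoryStruct X Y Z).hom.f
      (α_ X.A Y.A Z.A).hom
  leftUnitor_f : ∀ X : t.Algebra,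
    HEq (@MonoidalCategoryStruct.leftUnitor _ _ inst.toMonoidalCategoryStruct X).hom.f
      (λ_ X.A).hom
  rightUnitor_f : ∀ X : t.Algebra,
    HEq (@MonoidalCategoryStruct.rightUnitor _ _ inst.toMonoidalCategoryStruct X).hom.f
      (ρ_ X.A).hom

/-!
Given a bimonad, `(x, θ_x) ⊗ (y, θ_y) := (x ⊗ y, (θ_x ⊗ θ_y) ∘ B₂)` is again an algebra because
`μ` and `η` are opmonoidal, and the associator and unitors of `C` are algebra maps by
coassociativity and counitality of `(B₂, B₀)`.

Conversely, a monoidal structure on `C^t` lifting that of `C` gives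
`B₂ := θ_{Fx ⊗ Fy} ∘ t(η_x ⊗ η_y)` and `B₀ := θ_𝟙`. The counit `F(W.A) → W` is an algebra map
with underlying map `θ_W`, so every tensor `W ⊗ V` has structure map `(θ_W ⊗ θ_V) ∘ B₂`: the
lifting is determined by `(B₂, B₀)`. The bimonad axioms follow from the algebra axioms of
`Fx ⊗ Fy` and from the associator and unitors of `C^t` being algebra maps.
-/

namespace CategoryTheory.Monad.Algebra

variable {C : Type u₁} [Category.{v₁} C] {t : Monad C}

/-- The carriers of a lifted tensor product agree with the tensor products in `C` only
propositionally, so structure maps have to be transported along such equations. -/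
def strOfEq (W : t.Algebra) {c : C} (h : W.A = c) : t.obj c ⟶ c :=
  eqToHom (congrArg t.obj h.symm) ≫ W.a ≫ eqToHom h

@[simp]
lemma strOfEq_rfl (W : t.Algebra) : W.strOfEq rfl = W.a := by
  simp [strOfEq]

lemma strOfEq_heq (W : t.Algebra) {c : C} (h : W.A = c) : HEq (W.strOfEq h) W.a := by
  subst h; rw [strOfEq_rfl]

lemma unit_strOfEq (W : t.Algebra) {c : C} (h : W.A = c) : t.η.app c ≫ W.strOfEq h = 𝟙 c := by
  subst h; rw [strOfEq_rfl, W.unit]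

lemma assoc_strOfEq (W : t.Algebra) {c : C} (h : W.A = c) :
    t.μ.app c ≫ W.strOfEq h = t.map (W.strOfEq h) ≫ W.strOfEq h := by
  subst h; rw [strOfEq_rfl, W.assoc]

lemma Hom.map_comp_strOfEq {W V : t.Algebra} (f : W ⟶ V) {c c' : C} (hW : W.A = c)
    (hV : V.A = c') {f' : c ⟶ c'} (hf : HEq f.f f') :
    t.map f' ≫ V.strOfEq hV = W.strOfEq hW ≫ f' := by
  subst hW hV
  rw [strOfEq_rfl, strOfEq_rfl, ← eq_of_heq hf, f.h]

lemma ext_of_heq {W V : t.Algebra} (hA : W.A = V.A) (ha : HEq W.a V.a) : W = V := by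
  obtain ⟨A, a, _, _⟩ := W
  obtain ⟨A', a', _, _⟩ := V
  obtain rfl : A = A' := hA
  obtain rfl : a = a' := eq_of_heq ha
  rfl

end CategoryTheory.Monad.Algebra

namespace BimonadStr

variable {C : Type u₁} [Category.{v₁} C] [MonoidalCategory C] {t : Monad C} (B : BimonadStr t)

abbrev tensorAlg (X Y : t.Algebra) : t.Algebra where
  A := X.A ⊗ Y.A
  a := B.op.d X.A Y.A ≫ (X.a ⊗ₘ Y.a)
  unit := by rw [← assoc, B.unit_opmon, tensorHom_comp_tensorHom, X.unit, Y.unit]; simp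
  assoc := by
    rw [← assoc, B.mul_opmon]
    simp only [t.map_comp, assoc, reassoc_of% B.op.d_natural, tensorHom_comp_tensorHom, X.assoc,
      Y.assoc]

abbrev unitAlg : t.Algebra where
  A := 𝟙_ C
  a := B.op.e
  unit := B.unit_counit
  assoc := B.mul_counit

@[simps]
def tensorAlgHom {X X' Y Y' : t.Algebra} (f : X ⟶ X') (g : Y ⟶ Y') :
    B.tensorAlg X Y ⟶ B.tensorAlg X' Y' where
  f := f.f ⊗ₘ g.f
  h := by
    rw [reassoc_of% B.op.d_natural, tensorHom_comp_tensorHom, f.h, g.h, assoc,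
      tensorHom_comp_tensorHom]

@[simps!]
def associatorAlg (X Y Z : t.Algebra) :
    B.tensorAlg (B.tensorAlg X Y) Z ≅ B.tensorAlg X (B.tensorAlg Y Z) :=
  Monad.Algebra.isoMk (α_ X.A Y.A Z.A) <| by
    have hX : X.a ⊗ₘ (B.op.d Y.A Z.A ≫ (Y.a ⊗ₘ Z.a)) =
        (𝟙 _ ⊗ₘ B.op.d Y.A Z.A) ≫ (X.a ⊗ₘ (Y.a ⊗ₘ Z.a)) := by
      rw [tensorHom_comp_tensorHom, id_comp]
    have hZ : (B.op.d X.A Y.A ≫ (X.a ⊗ₘ Y.a)) ⊗ₘ Z.a =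
        (B.op.d X.A Y.A ⊗ₘ 𝟙 _) ≫ ((X.a ⊗ₘ Y.a) ⊗ₘ Z.a) := by
      rw [tensorHom_comp_tensorHom, id_comp]
    dsimp only [tensorAlg]
    rw [hX, hZ]
    simp only [assoc]
    rw [associator_naturality, reassoc_of% B.op.coassoc]

@[simps!]
def leftUnitorAlg (X : t.Algebra) : B.tensorAlg B.unitAlg X ≅ X :=
  Monad.Algebra.isoMk (λ_ X.A) <| by
    have h : B.op.e ⊗ₘ X.a = (B.op.e ⊗ₘ 𝟙 _) ≫ (𝟙 _ ⊗ₘ X.a) := by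
      rw [tensorHom_comp_tensorHom, id_comp, comp_id]
    dsimp only [tensorAlg, unitAlg]
    rw [h, assoc, assoc, id_tensorHom, leftUnitor_naturality, reassoc_of% B.op.counit_left]

@[simps!]
def rightUnitorAlg (X : t.Algebra) : B.tensorAlg X B.unitAlg ≅ X :=
  Monad.Algebra.isoMk (ρ_ X.A) <| by
    have h : X.a ⊗ₘ B.op.e = (𝟙 _ ⊗ₘ B.op.e) ≫ (X.a ⊗ₘ 𝟙 _) := by
      rw [tensorHom_comp_tensorHom, id_comp, comp_id]
    dsimp only [tensorAlg, unitAlg]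
    rw [h, assoc, assoc, tensorHom_id, rightUnitor_naturality, reassoc_of% B.op.counit_right]

@[simps]
abbrev monoidalCategoryStruct : MonoidalCategoryStruct t.Algebra where
  tensorObj := B.tensorAlg
  tensorHom := B.tensorAlgHom
  whiskerLeft X _ _ g := B.tensorAlgHom (𝟙 X) g
  whiskerRight f Y := B.tensorAlgHom f (𝟙 Y)
  tensorUnit := B.unitAlg
  associator := B.associatorAlg
  leftUnitor := B.leftUnitorAlg
  rightUnitor := B.rightUnitorAlg

abbrev monoidalCategory : MonoidalCategory t.Algebra :=
  letI := B.monoidalCategoryStruct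
  MonoidalCategory.ofTensorHom

def toStrictMonoidalAlg : StrictMonoidalAlg t where
  inst := B.monoidalCategory
  tensor_A _ _ := rfl
  unit_A := rfl
  tensorHom_f _ _ := HEq.rfl
  associator_f _ _ _ := HEq.rfl
  leftUnitor_f _ := HEq.rfl
  rightUnitor_f _ := HEq.rfl

theorem ext {B₁ B₂ : BimonadStr t} (hd : B₁.op.d = B₂.op.d) (he : B₁.op.e = B₂.op.e) :
    B₁ = B₂ := by
  obtain ⟨⟨d, e, _, _, _, _⟩, _, _, _, _⟩ := B₁
  obtain ⟨⟨d', e', _, _, _, _⟩, _, _, _, _⟩ := B₂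
  obtain rfl : d = d' := hd
  obtain rfl : e = e' := he
  rfl

end BimonadStr

namespace StrictMonoidalAlg

open Monad.Algebra

variable {C : Type u₁} [Category.{v₁} C] [MonoidalCategory C] {t : Monad C}
  (S : StrictMonoidalAlg t)

abbrev tensorObj (X Y : t.Algebra) : t.Algebra :=
  @MonoidalCategoryStruct.tensorObj _ _ S.inst.toMonoidalCategoryStruct X Y

abbrev tensorUnit : t.Algebra :=
  @MonoidalCategoryStruct.tensorUnit _ _ S.inst.toMonoidalCategoryStruct

abbrev tensorHom {X X' Y Y' : t.Algebra} (f : X ⟶ X') (g : Y ⟶ Y') :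
    S.tensorObj X Y ⟶ S.tensorObj X' Y' :=
  @MonoidalCategoryStruct.tensorHom _ _ S.inst.toMonoidalCategoryStruct _ _ _ _ f g

lemma whiskerLeft_f (X : t.Algebra) {Y Z : t.Algebra} (g : Y ⟶ Z) :
    HEq (@MonoidalCategoryStruct.whiskerLeft _ _ S.inst.toMonoidalCategoryStruct X _ _ g).f
      (𝟙 X.A ⊗ₘ g.f) := by
  rw [← @id_tensorHom _ _ S.inst]
  exact S.tensorHom_f _ _

lemma whiskerRight_f {X Y : t.Algebra} (f : X ⟶ Y) (Z : t.Algebra) :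
    HEq (@MonoidalCategoryStruct.whiskerRight _ _ S.inst.toMonoidalCategoryStruct _ _ f Z).f
      (f.f ⊗ₘ 𝟙 Z.A) := by
  rw [← @tensorHom_id _ _ S.inst]
  exact S.tensorHom_f _ _

theorem ext {S₁ S₂ : StrictMonoidalAlg t} (hobj : ∀ X Y, S₁.tensorObj X Y = S₂.tensorObj X Y)
    (hunit : S₁.tensorUnit = S₂.tensorUnit) : S₁ = S₂ := by
  have wlf₁ := S₁.whiskerLeft_f
  have wlf₂ := S₂.whiskerLeft_f
  have wrf₁ := @whiskerRight_f _ _ _ _ S₁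
  have wrf₂ := @whiskerRight_f _ _ _ _ S₂
  revert hobj hunit wlf₁ wlf₂ wrf₁ wrf₂
  obtain ⟨@⟨⟨obj₁, wl₁, wr₁, th₁, un₁, as₁, lu₁, ru₁⟩⟩, -, -, thf₁, asf₁, luf₁, ruf₁⟩ := S₁
  obtain ⟨@⟨⟨obj₂, wl₂, wr₂, th₂, un₂, as₂, lu₂, ru₂⟩⟩, -, -, thf₂, asf₂, luf₂, ruf₂⟩ := S₂
  intro hobj hunit wlf₁ wlf₂ wrf₁ wrf₂
  obtain rfl : obj₁ = obj₂ := funext₂ hobj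
  obtain rfl : un₁ = un₂ := hunit
  obtain rfl : @wl₁ = @wl₂ := by
    funext X Y Z g; exact Hom.ext (eq_of_heq ((wlf₁ X g).trans (wlf₂ X g).symm))
  obtain rfl : @wr₁ = @wr₂ := by
    funext X Y f Z; exact Hom.ext (eq_of_heq ((wrf₁ f Z).trans (wrf₂ f Z).symm))
  obtain rfl : @th₁ = @th₂ := by
    funext X X' Y Y' f g; exact Hom.ext (eq_of_heq ((thf₁ f g).trans (thf₂ f g).symm))
  obtain rfl : as₁ = as₂ := by
    funext X Y Z; exact Iso.ext (Hom.ext (eq_of_heq ((asf₁ X Y Z).trans (asf₂ X Y Z).symm)))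
  obtain rfl : lu₁ = lu₂ := by
    funext X; exact Iso.ext (Hom.ext (eq_of_heq ((luf₁ X).trans (luf₂ X).symm)))
  obtain rfl : ru₁ = ru₂ := by
    funext X; exact Iso.ext (Hom.ext (eq_of_heq ((ruf₁ X).trans (ruf₂ X).symm)))
  rfl

-- `S.tensor_A` with the carrier written as `t.obj x ⊗ t.obj y` rather than
-- `(t.free.obj x).A ⊗ (t.free.obj y).A`, so that the types of later rewrites match syntactically.
lemma tensorObj_free_A (x y : C) :
    (S.tensorObj (t.free.obj x) (t.free.obj y)).A = t.obj x ⊗ t.obj y :=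
  S.tensor_A _ _

def comul (x y : C) : t.obj (x ⊗ y) ⟶ t.obj x ⊗ t.obj y :=
  t.map (t.η.app x ⊗ₘ t.η.app y) ≫
    (S.tensorObj (t.free.obj x) (t.free.obj y)).strOfEq (S.tensorObj_free_A x y)

def counit : t.obj (𝟙_ C) ⟶ 𝟙_ C :=
  S.tensorUnit.strOfEq S.unit_A

lemma map_tensorHom_comp_strOfEq {W W' V V' : t.Algebra} (f : W ⟶ W') (g : V ⟶ V')
    {a a' b b' : C} {f' : a ⟶ a'} {g' : b ⟶ b'} (hf : HEq f.f f') (hg : HEq g.f g')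
    (hW : W.A = a) (hW' : W'.A = a') (hV : V.A = b) (hV' : V'.A = b')
    (h : (S.tensorObj W V).A = a ⊗ b) (h' : (S.tensorObj W' V').A = a' ⊗ b') :
    t.map (f' ⊗ₘ g') ≫ (S.tensorObj W' V').strOfEq h' =
      (S.tensorObj W V).strOfEq h ≫ (f' ⊗ₘ g') := by
  subst hW hW' hV hV'
  obtain rfl := eq_of_heq hf
  obtain rfl := eq_of_heq hg
  exact Hom.map_comp_strOfEq (S.tensorHom f g) h h' (S.tensorHom_f f g)

lemma comul_natural {x x' y y' : C} (f : x ⟶ x') (g : y ⟶ y') :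
    t.map (f ⊗ₘ g) ≫ S.comul x' y' = S.comul x y ≫ (t.map f ⊗ₘ t.map g) := by
  have h := S.map_tensorHom_comp_strOfEq (t.free.map f) (t.free.map g) (f' := t.map f)
    (g' := t.map g) HEq.rfl HEq.rfl rfl rfl rfl rfl
    (S.tensorObj_free_A _ _) (S.tensorObj_free_A _ _)
  have hf : f ≫ t.η.app x' = t.η.app x ≫ t.map f := t.η.naturality f
  have hg : g ≫ t.η.app y' = t.η.app y ≫ t.map g := t.η.naturality g
  rw [comul, comul, ← Functor.map_comp_assoc, tensorHom_comp_tensorHom, hf, hg,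
    ← tensorHom_comp_tensorHom, Functor.map_comp, Category.assoc, h, Category.assoc]

lemma strOfEq_tensorObj (W V : t.Algebra) {c c' : C} (hW : W.A = c) (hV : V.A = c')
    (hWV : (S.tensorObj W V).A = c ⊗ c') :
    (S.tensorObj W V).strOfEq hWV = S.comul c c' ≫ (W.strOfEq hW ⊗ₘ V.strOfEq hV) := by
  subst hW hV
  have h := S.map_tensorHom_comp_strOfEq (⟨W.a, W.assoc.symm⟩ : t.free.obj W.A ⟶ W)
    (⟨V.a, V.assoc.symm⟩ : t.free.obj V.A ⟶ V) (f' := W.a) (g' := V.a) HEq.rfl HEq.rfl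
    rfl rfl rfl rfl (S.tensor_A _ _) hWV
  calc (S.tensorObj W V).strOfEq hWV
      = t.map (t.η.app W.A ⊗ₘ t.η.app V.A) ≫ t.map (W.a ⊗ₘ V.a) ≫
          (S.tensorObj W V).strOfEq hWV := by
        simp only [← Functor.map_comp_assoc, tensorHom_comp_tensorHom, W.unit, V.unit,
          Functor.id_obj, id_tensorHom_id, t.map_id, id_comp]
    _ = _ := by rw [h, strOfEq_rfl, strOfEq_rfl, comul, Category.assoc]

lemma strOfEq_tensorObj_free (x y : C) :
    (S.tensorObj (t.free.obj x) (t.free.obj y)).strOfEq (S.tensorObj_free_A x y) =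
      S.comul (t.obj x) (t.obj y) ≫ (t.μ.app x ⊗ₘ t.μ.app y) := by
  rw [S.strOfEq_tensorObj _ _ (c := t.obj x) (c' := t.obj y) rfl rfl]
  erw [strOfEq_rfl, strOfEq_rfl]
  rfl

lemma comul_eq_map_comp_comul_obj (x y : C) :
    S.comul x y =
      t.map (t.η.app x ⊗ₘ t.η.app y) ≫ S.comul (t.obj x) (t.obj y) ≫ (t.μ.app x ⊗ₘ t.μ.app y) := by
  rw [← strOfEq_tensorObj_free, comul]

lemma unit_comul (x y : C) : t.η.app (x ⊗ y) ≫ S.comul x y = t.η.app x ⊗ₘ t.η.app y := by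
  have h : t.η.app (x ⊗ y) ≫ t.map (t.η.app x ⊗ₘ t.η.app y) =
      (t.η.app x ⊗ₘ t.η.app y) ≫ t.η.app _ := (t.η.naturality _).symm
  rw [comul, reassoc_of% h, unit_strOfEq, comp_id]

lemma mu_comul (x y : C) :
    t.μ.app (x ⊗ y) ≫ S.comul x y =
      t.map (S.comul x y) ≫ S.comul (t.obj x) (t.obj y) ≫ (t.μ.app x ⊗ₘ t.μ.app y) := by
  have h : t.μ.app (x ⊗ y) ≫ t.map (t.η.app x ⊗ₘ t.η.app y) =
      t.map (t.map (t.η.app x ⊗ₘ t.η.app y)) ≫ t.μ.app _ := (t.μ.naturality _).symm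
  rw [comul, reassoc_of% h, assoc_strOfEq, ← Functor.map_comp_assoc, ← comul,
    strOfEq_tensorObj_free]

lemma unit_counit : t.η.app (𝟙_ C) ≫ S.counit = 𝟙 (𝟙_ C) :=
  unit_strOfEq _ _

lemma mu_counit : t.μ.app (𝟙_ C) ≫ S.counit = t.map S.counit ≫ S.counit :=
  assoc_strOfEq _ _

lemma comul_coassoc (x y z : C) :
    S.comul (x ⊗ y) z ≫ (S.comul x y ⊗ₘ 𝟙 (t.obj z)) ≫ (α_ (t.obj x) (t.obj y) (t.obj z)).hom =
      t.map (α_ x y z).hom ≫ S.comul x (y ⊗ z) ≫ (𝟙 (t.obj x) ⊗ₘ S.comul y z) := by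
  have hα : t.map (α_ (t.obj x) (t.obj y) (t.obj z)).hom ≫ S.comul (t.obj x) (t.obj y ⊗ t.obj z) ≫
        (t.μ.app x ⊗ₘ (S.comul (t.obj y) (t.obj z) ≫ (t.μ.app y ⊗ₘ t.μ.app z))) =
      S.comul (t.obj x ⊗ t.obj y) (t.obj z) ≫
        ((S.comul (t.obj x) (t.obj y) ≫ (t.μ.app x ⊗ₘ t.μ.app y)) ⊗ₘ t.μ.app z) ≫
          (α_ (t.obj x) (t.obj y) (t.obj z)).hom := by
    have hL : (S.tensorObj (S.tensorObj (t.free.obj x) (t.free.obj y)) (t.free.obj z)).A =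
        (t.obj x ⊗ t.obj y) ⊗ t.obj z := by rw [S.tensor_A, S.tensorObj_free_A]; rfl
    have hR : (S.tensorObj (t.free.obj x) (S.tensorObj (t.free.obj y) (t.free.obj z))).A =
        t.obj x ⊗ (t.obj y ⊗ t.obj z) := by rw [S.tensor_A, S.tensorObj_free_A]; rfl
    have h := Hom.map_comp_strOfEq
      (@MonoidalCategoryStruct.associator _ _ S.inst.toMonoidalCategoryStruct _ _ _).hom hL hR
      (f' := (α_ (t.obj x) (t.obj y) (t.obj z)).hom) (S.associator_f _ _ _)
    rw [S.strOfEq_tensorObj _ _ (c := t.obj x) rfl (S.tensorObj_free_A y z),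
      S.strOfEq_tensorObj _ _ (c' := t.obj z) (S.tensorObj_free_A x y) rfl,
      strOfEq_tensorObj_free, strOfEq_tensorObj_free] at h
    erw [strOfEq_rfl, strOfEq_rfl] at h
    exact h.trans (Category.assoc _ _ _)
  calc _ = t.map ((t.η.app x ⊗ₘ t.η.app y) ⊗ₘ t.η.app z) ≫ S.comul (t.obj x ⊗ t.obj y) (t.obj z) ≫
          ((S.comul (t.obj x) (t.obj y) ≫ (t.μ.app x ⊗ₘ t.μ.app y)) ⊗ₘ t.μ.app z) ≫
            (α_ (t.obj x) (t.obj y) (t.obj z)).hom := by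
        rw [reassoc_of% S.comul_natural, tensorHom_comp_tensorHom_assoc]
        dsimp only [Functor.id_obj]
        rw [← comul_eq_map_comp_comul_obj, t.right_unit]
        rfl
    _ = t.map ((t.η.app x ⊗ₘ t.η.app y) ⊗ₘ t.η.app z) ≫ t.map (α_ _ _ _).hom ≫
          S.comul (t.obj x) (t.obj y ⊗ t.obj z) ≫
            (t.μ.app x ⊗ₘ (S.comul (t.obj y) (t.obj z) ≫ (t.μ.app y ⊗ₘ t.μ.app z))) := by
        rw [hα]
    _ = t.map (α_ x y z).hom ≫ t.map (t.η.app x ⊗ₘ (t.η.app y ⊗ₘ t.η.app z)) ≫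
          S.comul (t.obj x) (t.obj y ⊗ t.obj z) ≫
            (t.μ.app x ⊗ₘ (S.comul (t.obj y) (t.obj z) ≫ (t.μ.app y ⊗ₘ t.μ.app z))) := by
        rw [← Functor.map_comp_assoc, associator_naturality, Functor.map_comp_assoc]
        rfl
    _ = _ := by
        rw [reassoc_of% S.comul_natural, tensorHom_comp_tensorHom,
          ← comul_eq_map_comp_comul_obj, t.right_unit]
        rfl

lemma comul_counit_left (x : C) :
    S.comul (𝟙_ C) x ≫ (S.counit ⊗ₘ 𝟙 (t.obj x)) ≫ (λ_ (t.obj x)).hom = t.map (λ_ x).hom := by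
  have hl : S.comul (𝟙_ C) (t.obj x) ≫ (S.counit ⊗ₘ t.μ.app x) ≫ (λ_ (t.obj x)).hom =
      t.map (λ_ (t.obj x)).hom ≫ t.μ.app x := by
    have hW : (S.tensorObj S.tensorUnit (t.free.obj x)).A = 𝟙_ C ⊗ t.obj x := by
      rw [S.tensor_A, S.unit_A]; rfl
    have h := Hom.map_comp_strOfEq
      (@MonoidalCategoryStruct.leftUnitor _ _ S.inst.toMonoidalCategoryStruct _).hom hW
      (rfl : (t.free.obj x).A = t.obj x) (f' := (λ_ (t.obj x)).hom) (S.leftUnitor_f _)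
    rw [S.strOfEq_tensorObj _ _ S.unit_A (c' := t.obj x) rfl] at h
    erw [strOfEq_rfl] at h
    exact (h.trans (Category.assoc _ _ _)).symm
  calc _ = t.map (𝟙 (𝟙_ C) ⊗ₘ t.η.app x) ≫ S.comul (𝟙_ C) (t.obj x) ≫
          (S.counit ⊗ₘ t.μ.app x) ≫ (λ_ (t.obj x)).hom := by
        rw [reassoc_of% S.comul_natural, tensorHom_comp_tensorHom_assoc, t.map_id, id_comp,
          t.right_unit]
        rfl
    _ = t.map (𝟙 (𝟙_ C) ⊗ₘ t.η.app x) ≫ t.map (λ_ (t.obj x)).hom ≫ t.μ.app x := by rw [hl]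
    _ = _ := by
        rw [← Functor.map_comp_assoc, id_tensorHom, leftUnitor_naturality, Functor.map_comp_assoc,
          t.right_unit, comp_id]
        rfl

lemma comul_counit_right (x : C) :
    S.comul x (𝟙_ C) ≫ (𝟙 (t.obj x) ⊗ₘ S.counit) ≫ (ρ_ (t.obj x)).hom = t.map (ρ_ x).hom := by
  have hρ : S.comul (t.obj x) (𝟙_ C) ≫ (t.μ.app x ⊗ₘ S.counit) ≫ (ρ_ (t.obj x)).hom =
      t.map (ρ_ (t.obj x)).hom ≫ t.μ.app x := by
    have hW : (S.tensorObj (t.free.obj x) S.tensorUnit).A = t.obj x ⊗ 𝟙_ C := by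
      rw [S.tensor_A, S.unit_A]; rfl
    have h := Hom.map_comp_strOfEq
      (@MonoidalCategoryStruct.rightUnitor _ _ S.inst.toMonoidalCategoryStruct _).hom hW
      (rfl : (t.free.obj x).A = t.obj x) (f' := (ρ_ (t.obj x)).hom) (S.rightUnitor_f _)
    rw [S.strOfEq_tensorObj _ _ (c := t.obj x) rfl S.unit_A] at h
    erw [strOfEq_rfl] at h
    exact (h.trans (Category.assoc _ _ _)).symm
  calc _ = t.map (t.η.app x ⊗ₘ 𝟙 (𝟙_ C)) ≫ S.comul (t.obj x) (𝟙_ C) ≫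
          (t.μ.app x ⊗ₘ S.counit) ≫ (ρ_ (t.obj x)).hom := by
        rw [reassoc_of% S.comul_natural, tensorHom_comp_tensorHom_assoc, t.map_id, id_comp,
          t.right_unit]
        rfl
    _ = t.map (t.η.app x ⊗ₘ 𝟙 (𝟙_ C)) ≫ t.map (ρ_ (t.obj x)).hom ≫ t.μ.app x := by rw [hρ]
    _ = _ := by
        rw [← Functor.map_comp_assoc, tensorHom_id, rightUnitor_naturality, Functor.map_comp_assoc,
          t.right_unit, comp_id]
        rfl

def toBimonadStr : BimonadStr t where
  op :=
    { d := S.comul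
      e := S.counit
      d_natural := S.comul_natural
      coassoc := S.comul_coassoc
      counit_left := S.comul_counit_left
      counit_right := S.comul_counit_right }
  mul_opmon := S.mu_comul
  mul_counit := S.mu_counit
  unit_opmon := S.unit_comul
  unit_counit := S.unit_counit

end StrictMonoidalAlg

section

open Monad.Algebra

variable {C : Type u₁} [Category.{v₁} C] [MonoidalCategory C] {t : Monad C}

theorem BimonadStr.toStrictMonoidalAlg_toBimonadStr (B : BimonadStr t) :
    B.toStrictMonoidalAlg.toBimonadStr = B := by
  refine BimonadStr.ext (funext₂ fun x y => ?_) (strOfEq_rfl B.unitAlg)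
  change t.map _ ≫ (B.tensorAlg (t.free.obj x) (t.free.obj y)).strOfEq _ = _
  erw [strOfEq_rfl]
  change t.map _ ≫ B.op.d (t.obj x) (t.obj y) ≫ (t.μ.app x ⊗ₘ t.μ.app y) = B.op.d x y
  rw [reassoc_of% B.op.d_natural, tensorHom_comp_tensorHom, t.right_unit, t.right_unit]
  simp only [Functor.id_obj, id_tensorHom_id, comp_id]

theorem StrictMonoidalAlg.toBimonadStr_toStrictMonoidalAlg (S : StrictMonoidalAlg t) :
    S.toBimonadStr.toStrictMonoidalAlg = S := by
  refine StrictMonoidalAlg.ext (fun X Y => ext_of_heq (S.tensor_A X Y).symm ?_)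
    (ext_of_heq S.unit_A.symm (strOfEq_heq _ _))
  have h := S.strOfEq_tensorObj X Y rfl rfl (S.tensor_A X Y)
  rw [strOfEq_rfl, strOfEq_rfl] at h
  change HEq (S.comul X.A Y.A ≫ (X.a ⊗ₘ Y.a)) _
  rw [← h]
  exact strOfEq_heq _ _

def bimonadStrEquiv (t : Monad C) : BimonadStr t ≃ StrictMonoidalAlg t where
  toFun := BimonadStr.toStrictMonoidalAlg
  invFun := StrictMonoidalAlg.toBimonadStr
  left_inv := BimonadStr.toStrictMonoidalAlg_toBimonadStr
  right_inv := StrictMonoidalAlg.toBimonadStr_toStrictMonoidalAlg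

end

/-- Bimonad structures on a monad `t` on a monoidal category `C` are in one-to-one
correspondence with monoidal structures on `C^t` for which the forgetful functor is
strict monoidal; the correspondence sends a bimonad structure `(B₂, B₀)` to the monoidal
structure with `(x, θ_x) ⊗ (y, θ_y) = (x ⊗ y, (θ_x ⊗ θ_y) ∘ B₂)` and unit `(1, B₀)`. -/
theorem stmt5 {C : Type u₁} [Category.{v₁} C] [MonoidalCategory C] (t : Monad C) :
    ∃ e : BimonadStr t ≃ StrictMonoidalAlg t,
      ∀ bs : BimonadStr t,
        (∀ X Y : t.Algebra,
          HEq (@MonoidalCategoryStruct.tensorObj _ _ (e bs).inst.toMonoidalCategoryStruct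
                X Y).a
            (bs.op.d X.A Y.A ≫ (X.a ⊗ₘ Y.a))) ∧
        HEq (@MonoidalCategoryStruct.tensorUnit _ _ (e bs).inst.toMonoidalCategoryStruct).a
          bs.op.e := by
  exact ⟨bimonadStrEquiv t, fun _ => ⟨fun _ _ => HEq.rfl, HEq.rfl⟩⟩
end

section
/- For a ∈ [0,1), the function C_a : ℝ → ℝ defined by C_a(x) = min{ a + n : n ∈ ℤ, a + n ≥ x } is a comodule monad on the poset (ℝ, ≤) over the ceiling bimonad H(x) = ⌈x⌉: specifically C_a is monotone, C_a(x + y) ≤ C_a(x) + ⌈y⌉ for all x, y ∈ ℝ (giving the coaction), C_a(C_a(x)) = C_a(x) (idempotence gives the multiplication), and x ≤ C_a(x) for all x (the unit). -/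
/-- `C_a(x) = min { a + n : n ∈ ℤ, a + n ≥ x }`. -/
noncomputable def Ca (a x : ℝ) : ℝ := sInf {y : ℝ | (∃ n : ℤ, y = a + n) ∧ x ≤ y}

lemma Ca_eq (a x : ℝ) : Ca a x = a + ⌈x - a⌉ := by
  have hL : IsLeast {y : ℝ | (∃ n : ℤ, y = a + n) ∧ x ≤ y} (a + ⌈x - a⌉) := by
    constructor
    · exact ⟨⟨⌈x - a⌉, rfl⟩, by linarith [Int.le_ceil (x - a)]⟩
    · rintro y ⟨⟨n, rfl⟩, hxy⟩
      have : (⌈x - a⌉ : ℝ) ≤ n := by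
        exact_mod_cast Int.ceil_le.mpr (by linarith)
      linarith
  exact hL.csInf_eq

/-- For `a ∈ [0,1)`, the map `C_a` is a comodule monad on the poset `(ℝ, ≤)` over the
ceiling bimonad `H(x) = ⌈x⌉`: it is monotone, satisfies the coaction inequality
`C_a(x + y) ≤ C_a(x) + ⌈y⌉`, is idempotent (multiplication) and satisfies `x ≤ C_a(x)`
(unit).  In a poset all compatibility diagrams hold automatically. -/
theorem stmt7 (a : ℝ) (ha : a ∈ Set.Ico (0 : ℝ) 1) :
    Monotone (Ca a) ∧
    (∀ x y : ℝ, Ca a (x + y) ≤ Ca a x + (⌈y⌉ : ℝ)) ∧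
    (∀ x : ℝ, Ca a (Ca a x) = Ca a x) ∧
    (∀ x : ℝ, x ≤ Ca a x) := by
  refine ⟨?_, ?_, ?_, ?_⟩
  · intro x y hxy
    simp only [Ca_eq]
    have : ⌈x - a⌉ ≤ ⌈y - a⌉ := Int.ceil_le_ceil (by linarith)
    have : (⌈x - a⌉ : ℝ) ≤ ⌈y - a⌉ := by exact_mod_cast this
    linarith
  · intro x y
    simp only [Ca_eq]
    have h : ⌈x + y - a⌉ ≤ ⌈x - a⌉ + ⌈y⌉ := by
      calc ⌈x + y - a⌉ = ⌈(x - a) + y⌉ := by ring_nf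
        _ ≤ ⌈x - a⌉ + ⌈y⌉ := Int.ceil_add_le _ _
    have : (⌈x + y - a⌉ : ℝ) ≤ (⌈x - a⌉ : ℝ) + ⌈y⌉ := by exact_mod_cast h
    linarith
  · intro x
    simp [Ca_eq, add_sub_cancel_left]
  · intro x
    rw [Ca_eq]
    linarith [Int.le_ceil (x - a)]
end
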